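/- arXiv:2007.08880 — 8 statements merged into one kernel-verified Lean document; each statement's English description precedes it below -/
import Mathlib

section
/- Suppose for every stage t the mixed partial derivative Q_ux^t = 0 and the parameter curvature is spherical, Q_uu^t = (1/η) I with η > 0. Then at every stage the DDP feedback gain K_t = −(Q_uu^t)⁻¹ Q_ux^t is zero, the open gain is k_t = −η Q_u^t, and Q_u^t = G_tᵀ V_x^{t+1} + ℓ_u^t equals the Back-propagation gradient J_u^t = G_tᵀ J_x^{t+1} + ℓ_u^t; hence the DDP update δu_t* = k_t + K_t δx coincides with the gradient-descent update −η J_u^t for every δx. -/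
open Matrix

/-- With Q_ux^t = 0 and spherical curvature Q_uu^t = (1/η)I, DDP has zero
feedback gain, open gain k_t = −η Q_u^t, Q_u^t equals the Back-propagation gradient J_u^t,
and the DDP update coincides with gradient descent −η J_u^t for every δx. -/
theorem ddp_degenerates_to_gd {T : ℕ} (n m : ℕ → ℕ) (η : ℝ) (hη : 0 < η)
    (F : ∀ t, Matrix (Fin (n (t+1))) (Fin (n t)) ℝ)
    (G : ∀ t, Matrix (Fin (n (t+1))) (Fin (m t)) ℝ)
    (ℓu : ∀ t, Fin (m t) → ℝ)
    (g : Fin (n T) → ℝ)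
    (J V : ∀ t, Fin (n t) → ℝ)
    (Ju Qu k : ∀ t, Fin (m t) → ℝ)
    (Quu : ∀ t, Matrix (Fin (m t)) (Fin (m t)) ℝ)
    (Qux : ∀ t, Matrix (Fin (m t)) (Fin (n t)) ℝ)
    (K : ∀ t, Matrix (Fin (m t)) (Fin (n t)) ℝ)
    (hJT : J T = g) (hJ : ∀ t < T, J t = (F t)ᵀ *ᵥ J (t+1))
    (hJu : ∀ t < T, Ju t = (G t)ᵀ *ᵥ J (t+1) + ℓu t)
    (hVT : V T = g)
    (hV : ∀ t < T, V t = (F t)ᵀ *ᵥ V (t+1) + (Qux t)ᵀ *ᵥ k t)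
    (hQu : ∀ t < T, Qu t = (G t)ᵀ *ᵥ V (t+1) + ℓu t)
    (hk : ∀ t < T, k t = -((Quu t)⁻¹ *ᵥ Qu t))
    (hK : ∀ t < T, K t = -((Quu t)⁻¹ * Qux t))
    (hQuu : ∀ t < T, Quu t = η⁻¹ • (1 : Matrix (Fin (m t)) (Fin (m t)) ℝ))
    (hQux : ∀ t < T, Qux t = 0) :
    ∀ t < T, K t = 0 ∧ k t = (-η) • Qu t ∧ Qu t = Ju t ∧
      ∀ δx : Fin (n t) → ℝ, k t + (K t) *ᵥ δx = (-η) • Ju t := by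
  -- inverse of spherical curvature
  have hinv : ∀ t < T, (Quu t)⁻¹ = η • (1 : Matrix (Fin (m t)) (Fin (m t)) ℝ) := by
    intro t ht
    rw [hQuu t ht]
    apply Matrix.inv_eq_right_inv
    rw [Matrix.smul_mul, Matrix.mul_smul, Matrix.one_mul, smul_smul,
      inv_mul_cancel₀ hη.ne', one_smul]
  -- V = J by downward induction
  have hVJ : ∀ d t, t + d = T → V t = J t := by
    intro d
    induction d with
    | zero => intro t h; simp at h; subst h; rw [hVT, hJT]
    | succ d ih =>
      intro t h
      have ht : t < T := by omega
      have h1 : (t+1) + d = T := by omega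
      rw [hV t ht, hQux t ht, hJ t ht, ih (t+1) h1]
      simp
  intro t ht
  have hVJ1 : V (t+1) = J (t+1) := hVJ (T - (t+1)) (t+1) (by omega)
  have hKz : K t = 0 := by rw [hK t ht, hQux t ht, Matrix.mul_zero, neg_zero]
  have hQuJu : Qu t = Ju t := by rw [hQu t ht, hJu t ht, hVJ1]
  have hkeq : k t = (-η) • Qu t := by
    rw [hk t ht, hinv t ht]
    rw [Matrix.smul_mulVec, Matrix.one_mulVec, neg_smul]
  refine ⟨hKz, hkeq, hQuJu, fun δx => ?_⟩
  rw [hKz, Matrix.zero_mulVec, add_zero, hkeq, hQuJu]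
end

section
/- Let V ∈ ℝ^{(n'+r)×(n'+r)} be symmetric with blocks V_xx ∈ ℝ^{n'×n'}, V_{x x_r} ∈ ℝ^{n'×r}, V_{x_r x_r} ∈ ℝ^{r×r} (and V_{x_r x} = V_{x x_r}ᵀ). Let the state-augmented Jacobians be F̂_x = [[F_x, 0],[0, I_r]] and F̂_u = [F_u; 0], where F_x ∈ ℝ^{n'×n} and F_u ∈ ℝ^{n'×m}, and let Q_uu ∈ ℝ^{m×m} be symmetric invertible. Define Q̂_x̂x̂ = F̂_xᵀ V F̂_x and Q̂_ux̂ = F̂_uᵀ V F̂_x. Then the updated augmented value Hessian V̂ := Q̂_x̂x̂ − Q̂_ux̂ᵀ Q_uu⁻¹ Q̂_ux̂ has blocks: top-left block Q_xx + Q_xu K, top-right block F_xᵀ V_{x x_r} − Kᵀ Q_uu G, and bottom-right block V_{x_r x_r} − Gᵀ Q_uu G, where Q_xx = F_xᵀ V_xx F_x, Q_ux = F_uᵀ V_xx F_x, Q_xu = Q_uxᵀ, K = −Q_uu⁻¹ Q_ux, and G = −Q_uu⁻¹ F_uᵀ V_{x x_r}. -/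
open Matrix

/-!
Every matrix in the recursion is block structured, so `V̂` is computed blockwise: conjugating `V`
by `diag(F_x, I)` and `[F_u; 0]` gives `Q̂_x̂x̂` and `Q̂_ux̂ = [Q_ux, F_uᵀ V_{x x_r}]`, and the
correction term `Q̂_ux̂ᵀ Q_uu⁻¹ Q̂_ux̂` splits into the four products of these two columns.
The gain matrices then enter only through `(-(Q⁻¹ A))ᵀ Q (-(Q⁻¹ B)) = Aᵀ Q⁻¹ B`, which holds
because `Q⁻¹` is symmetric together with `Q`.
-/

namespace Matrix

variable {R : Type*} [CommRing R] {k l m n o : Type*}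

-- The type ascriptions are needed: otherwise the outer product elaborates through the
-- `CStarMatrix` multiplication instance and the block lemmas no longer rewrite it.
theorem fromBlocks_one_transpose_mul_fromBlocks_mul_fromBlocks_one [Fintype m] [Fintype n]
    [DecidableEq n] (F : Matrix m k R) (A : Matrix m m R) (B : Matrix m n R) (C : Matrix n m R)
    (D : Matrix n n R) :
    (fromBlocks F 0 0 1 : Matrix (m ⊕ n) (k ⊕ n) R)ᵀ * fromBlocks A B C D *
      (fromBlocks F 0 0 1 : Matrix (m ⊕ n) (k ⊕ n) R) =
      fromBlocks (Fᵀ * A * F) (Fᵀ * B) (C * F) D := by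
  simp [fromBlocks_transpose, fromBlocks_multiply, Matrix.mul_assoc]

theorem fromRows_zero_transpose_mul_fromBlocks_mul_fromBlocks_one [Fintype m] [Fintype n]
    [DecidableEq n] (G : Matrix m o R) (F : Matrix m k R) (A : Matrix m m R) (B : Matrix m n R)
    (C : Matrix n m R) (D : Matrix n n R) :
    (fromRows G (0 : Matrix n o R))ᵀ * fromBlocks A B C D *
      (fromBlocks F 0 0 1 : Matrix (m ⊕ n) (k ⊕ n) R) =
      fromCols (Gᵀ * A * F) (Gᵀ * B) := by
  simp [transpose_fromRows, fromCols_mul_fromBlocks, Matrix.mul_assoc]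

theorem fromBlocks_sub_fromCols_transpose_mul_mul_fromCols [Fintype m]
    (A : Matrix k k R) (B : Matrix k l R) (C : Matrix l k R) (D : Matrix l l R)
    (X : Matrix m k R) (Y : Matrix m l R) (M : Matrix m m R) :
    fromBlocks A B C D - (fromCols X Y)ᵀ * M * fromCols X Y =
      fromBlocks (A - Xᵀ * M * X) (B - Xᵀ * M * Y) (C - Yᵀ * M * X) (D - Yᵀ * M * Y) := by
  rw [transpose_fromCols, fromRows_mul, fromRows_mul_fromCols]
  ext (i | i) (j | j) <;> rfl

theorem IsSymm.neg_inv_mul_transpose_mul_mul_neg_inv_mul [Fintype m] [DecidableEq m]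
    {Q : Matrix m m R} (hQ : Q.IsSymm) (hdet : IsUnit Q.det) (A : Matrix m k R)
    (B : Matrix m l R) :
    (-(Q⁻¹ * A))ᵀ * Q * -(Q⁻¹ * B) = Aᵀ * Q⁻¹ * B := by
  rw [transpose_neg, transpose_mul, transpose_nonsing_inv, hQ.eq, Matrix.neg_mul,
    Matrix.neg_mul, Matrix.mul_neg, neg_neg, Matrix.mul_assoc, Matrix.mul_assoc,
    ← Matrix.mul_assoc Q, mul_nonsing_inv Q hdet, Matrix.one_mul, Matrix.mul_assoc]

end Matrix

theorem gtddp_value_hessian_blocks_general {n npr r m : ℕ}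
    (Vxx : Matrix (Fin npr) (Fin npr) ℝ)
    (Vxxr : Matrix (Fin npr) (Fin r) ℝ)
    (Vxrxr : Matrix (Fin r) (Fin r) ℝ)
    (Fx : Matrix (Fin npr) (Fin n) ℝ) (Fu : Matrix (Fin npr) (Fin m) ℝ)
    (Quu : Matrix (Fin m) (Fin m) ℝ)
    (hQuu : Quu.IsSymm) (hQuuInv : IsUnit Quu.det) :
    let V : Matrix (Fin npr ⊕ Fin r) (Fin npr ⊕ Fin r) ℝ :=
      fromBlocks Vxx Vxxr Vxxrᵀ Vxrxr
    let Fxhat : Matrix (Fin npr ⊕ Fin r) (Fin n ⊕ Fin r) ℝ :=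
      fromBlocks Fx 0 0 1
    let Fuhat : Matrix (Fin npr ⊕ Fin r) (Fin m) ℝ :=
      Matrix.of fun i j => Sum.casesOn i (fun i1 => Fu i1 j) (fun _ => 0)
    let Qhxx := Fxhatᵀ * V * Fxhat
    let Qhux := Fuhatᵀ * V * Fxhat
    let Vhat := Qhxx - Qhuxᵀ * Quu⁻¹ * Qhux
    let Qxx := Fxᵀ * Vxx * Fx
    let Qux := Fuᵀ * Vxx * Fx
    let Qxu := Quxᵀ
    let K := -(Quu⁻¹ * Qux)
    let G := -(Quu⁻¹ * (Fuᵀ * Vxxr))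
    Vhat.toBlocks₁₁ = Qxx + Qxu * K
      ∧ Vhat.toBlocks₁₂ = Fxᵀ * Vxxr - Kᵀ * Quu * G
      ∧ Vhat.toBlocks₂₂ = Vxrxr - Gᵀ * Quu * G := by
  intro V Fxhat Fuhat Qhxx Qhux Vhat Qxx Qux Qxu K G
  have hFuhat : Fuhat = fromRows Fu 0 := by
    ext (i | i) j <;> rfl
  have hVhat : Vhat = fromBlocks (Qxx - Quxᵀ * Quu⁻¹ * Qux)
      (Fxᵀ * Vxxr - Quxᵀ * Quu⁻¹ * (Fuᵀ * Vxxr)) (Vxxrᵀ * Fx - (Fuᵀ * Vxxr)ᵀ * Quu⁻¹ * Qux)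
      (Vxrxr - (Fuᵀ * Vxxr)ᵀ * Quu⁻¹ * (Fuᵀ * Vxxr)) := by
    simp only [Vhat, Qhxx, Qhux, hFuhat, V, Fxhat,
      fromBlocks_one_transpose_mul_fromBlocks_mul_fromBlocks_one,
      fromRows_zero_transpose_mul_fromBlocks_mul_fromBlocks_one,
      fromBlocks_sub_fromCols_transpose_mul_mul_fromCols, Qxx, Qux]
  refine ⟨?_, ?_, ?_⟩
  · rw [hVhat, toBlocks_fromBlocks₁₁, Matrix.mul_neg, ← sub_eq_add_neg, Matrix.mul_assoc]
  · rw [hVhat, toBlocks_fromBlocks₁₂,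
      IsSymm.neg_inv_mul_transpose_mul_mul_neg_inv_mul hQuu hQuuInv]
  · rw [hVhat, toBlocks_fromBlocks₂₂,
      IsSymm.neg_inv_mul_transpose_mul_mul_neg_inv_mul hQuu hQuuInv]

/-- Blocks of the updated augmented value Hessian
V̂ = Q̂_x̂x̂ − Q̂_ux̂ᵀ Q_uu⁻¹ Q̂_ux̂ in GT-DDP on a residual-augmented system. -/
theorem gtddp_value_hessian_blocks {n npr r m : ℕ}
    (Vxx : Matrix (Fin npr) (Fin npr) ℝ)
    (Vxxr : Matrix (Fin npr) (Fin r) ℝ)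
    (Vxrxr : Matrix (Fin r) (Fin r) ℝ)
    (Fx : Matrix (Fin npr) (Fin n) ℝ) (Fu : Matrix (Fin npr) (Fin m) ℝ)
    (Quu : Matrix (Fin m) (Fin m) ℝ)
    (hVxx : Vxx.IsSymm) (hVxrxr : Vxrxr.IsSymm)
    (hQuu : Quu.IsSymm) (hQuuInv : IsUnit Quu.det) :
    let V : Matrix (Fin npr ⊕ Fin r) (Fin npr ⊕ Fin r) ℝ :=
      fromBlocks Vxx Vxxr Vxxrᵀ Vxrxr
    let Fxhat : Matrix (Fin npr ⊕ Fin r) (Fin n ⊕ Fin r) ℝ :=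
      fromBlocks Fx 0 0 1
    let Fuhat : Matrix (Fin npr ⊕ Fin r) (Fin m) ℝ :=
      Matrix.of fun i j => Sum.casesOn i (fun i1 => Fu i1 j) (fun _ => 0)
    let Qhxx := Fxhatᵀ * V * Fxhat
    let Qhux := Fuhatᵀ * V * Fxhat
    let Vhat := Qhxx - Qhuxᵀ * Quu⁻¹ * Qhux
    let Qxx := Fxᵀ * Vxx * Fx
    let Qux := Fuᵀ * Vxx * Fx
    let Qxu := Quxᵀ
    let K := -(Quu⁻¹ * Qux)
    let G := -(Quu⁻¹ * (Fuᵀ * Vxxr))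
    Vhat.toBlocks₁₁ = Qxx + Qxu * K
      ∧ Vhat.toBlocks₁₂ = Fxᵀ * Vxxr - Kᵀ * Quu * G
      ∧ Vhat.toBlocks₂₂ = Vxrxr - Gᵀ * Quu * G :=
  gtddp_value_hessian_blocks_general Vxx Vxxr Vxrxr Fx Fu Quu hQuu hQuuInv
end

section
/- Let V_x ∈ ℝ^{n'}, V_{x_r} ∈ ℝʳ be the blocks of the augmented value gradient V̂ = [V_x; V_{x_r}] at stage t+1, let F̂_x = [[F_x, 0],[0, I_r]] and F̂_u = [F_u; 0] be the augmented Jacobians, let ℓ_u ∈ ℝᵐ, and let Q_uu ∈ ℝ^{m×m} be symmetric invertible and M = V^{t+1}_{x x_r} ∈ ℝ^{n'×r}. Define Q̂_x̂ = F̂_xᵀ V̂, Q̂_u = F̂_uᵀ V̂ + ℓ_u, Q̂_ux̂ = [F_uᵀ V_xx F_x, F_uᵀ M]. Then the updated augmented value gradient Q̂_x̂ − Q̂_ux̂ᵀ Q_uu⁻¹ Q̂_u has blocks [Q_x + Q_xu k; V_{x_r} − Gᵀ Q_uu k], where Q_x = F_xᵀ V_x, Q_u = F_uᵀ V_x + ℓ_u,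 Q_xu = (F_uᵀ V_xx F_x)ᵀ, k = −Q_uu⁻¹ Q_u, and G = −Q_uu⁻¹ F_uᵀ M. -/
/-!
Since the residual block of `F̂_x` is the identity and that of `F̂_u` vanishes,
`Q̂_x̂ = (Q_x, V_{x_r})` and `Q̂_u = Q_u`. The column blocks of `Q̂_ux̂` split the correction
`Q̂_ux̂ᵀ Q_uu⁻¹ Q_u` along the two blocks of the state; on the residual block, symmetry of `Q_uu`
gives `(F_uᵀ M)ᵀ Q_uu⁻¹ = -Gᵀ`, and `Q_uu⁻¹ Q_u = -k = -Q_uu⁻¹ Q_uu k`.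
-/

open Matrix

namespace Matrix

variable {R m n p : Type*} [CommRing R]

lemma fromBlocks_zero_zero_one_transpose_mulVec_sumElim [Fintype m] [Fintype p] [DecidableEq p]
    (A : Matrix m n R) (v : m → R) (w : p → R) :
    (fromBlocks A 0 0 (1 : Matrix p p R))ᵀ *ᵥ Sum.elim v w = Sum.elim (Aᵀ *ᵥ v) w := by
  simp [fromBlocks_transpose, fromBlocks_mulVec]

lemma fromRows_zero_transpose_mulVec_sumElim [Fintype m] [Fintype p]
    (A : Matrix m n R) (v : m → R) (w : p → R) :
    (fromRows A (0 : Matrix p n R))ᵀ *ᵥ Sum.elim v w = Aᵀ *ᵥ v := by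
  simp [transpose_fromRows]

lemma sumElim_sub_fromCols_transpose_mul_mulVec [Fintype m]
    (q : n → R) (v : p → R) (A : Matrix m n R) (B : Matrix m p R) (K : Matrix m m R)
    (u : m → R) :
    Sum.elim q v - ((fromCols A B)ᵀ * K) *ᵥ u
      = Sum.elim (q - (Aᵀ * K) *ᵥ u) (v - (Bᵀ * K) *ᵥ u) := by
  rw [transpose_fromCols, fromRows_mul, fromRows_mulVec, Sum.elim_sub_sub]

lemma mulVec_nonsing_inv_mulVec [Fintype m] [DecidableEq m] {Q : Matrix m m R}
    (hQ : IsUnit Q.det) (g : m → R) : Q *ᵥ (Q⁻¹ *ᵥ g) = g := by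
  rw [mulVec_mulVec, mul_nonsing_inv Q hQ, one_mulVec]

lemma IsSymm.transpose_nonsing_inv_mul [Fintype m] [DecidableEq m] {Q : Matrix m m R}
    (hQ : Q.IsSymm) (B : Matrix m p R) : (Q⁻¹ * B)ᵀ = Bᵀ * Q⁻¹ := by
  rw [transpose_mul, hQ.inv.eq]

end Matrix

/-- Blocks of the updated augmented value gradient
Q̂_x̂ − Q̂_ux̂ᵀ Q_uu⁻¹ Q̂_u in GT-DDP on a residual-augmented system. -/
theorem gtddp_value_gradient_blocks {n npr r m : ℕ}
    (Vx : Fin npr → ℝ) (Vxr : Fin r → ℝ)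
    (Vxx : Matrix (Fin npr) (Fin npr) ℝ)
    (M : Matrix (Fin npr) (Fin r) ℝ)
    (Fx : Matrix (Fin npr) (Fin n) ℝ) (Fu : Matrix (Fin npr) (Fin m) ℝ)
    (ℓu : Fin m → ℝ)
    (Quu : Matrix (Fin m) (Fin m) ℝ)
    (hQuu : Quu.IsSymm) (hQuuInv : IsUnit Quu.det) :
    let Vhat : Fin npr ⊕ Fin r → ℝ := Sum.elim Vx Vxr
    let Fxhat : Matrix (Fin npr ⊕ Fin r) (Fin n ⊕ Fin r) ℝ :=
      fromBlocks Fx 0 0 1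
    let Fuhat : Matrix (Fin npr ⊕ Fin r) (Fin m) ℝ :=
      Matrix.of fun i j => Sum.casesOn i (fun i1 => Fu i1 j) (fun _ => 0)
    let Qhx : Fin n ⊕ Fin r → ℝ := Fxhatᵀ *ᵥ Vhat
    let Qhu : Fin m → ℝ := Fuhatᵀ *ᵥ Vhat + ℓu
    let Qhux : Matrix (Fin m) (Fin n ⊕ Fin r) ℝ :=
      Matrix.of fun i j => Sum.casesOn j (fun j1 => (Fuᵀ * Vxx * Fx) i j1)
        (fun j2 => (Fuᵀ * M) i j2)
    let Qx : Fin n → ℝ := Fxᵀ *ᵥ Vx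
    let Qu : Fin m → ℝ := Fuᵀ *ᵥ Vx + ℓu
    let Qxu : Matrix (Fin n) (Fin m) ℝ := (Fuᵀ * Vxx * Fx)ᵀ
    let k : Fin m → ℝ := -(Quu⁻¹ *ᵥ Qu)
    let G : Matrix (Fin m) (Fin r) ℝ := -(Quu⁻¹ * (Fuᵀ * M))
    Qhx - (Qhuxᵀ * Quu⁻¹) *ᵥ Qhu
      = Sum.elim (Qx + Qxu *ᵥ k) (Vxr - Gᵀ *ᵥ (Quu *ᵥ k)) := by
  intro Vhat Fxhat Fuhat Qhx Qhu Qhux Qx Qu Qxu k G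
  have hQhx : Qhx = Sum.elim Qx Vxr := fromBlocks_zero_zero_one_transpose_mulVec_sumElim Fx Vx Vxr
  have hFuhat : Fuhat = fromRows Fu 0 := by ext (i | i) j <;> rfl
  have hQhu : Qhu = Qu := by
    simp only [Qhu, Qu, Vhat, hFuhat, fromRows_zero_transpose_mulVec_sumElim]
  have hQhux : Qhux = fromCols (Fuᵀ * Vxx * Fx) (Fuᵀ * M) := by ext i (j | j) <;> rfl
  have hfeedforward : Qxu *ᵥ k = -((Qxu * Quu⁻¹) *ᵥ Qu) := by
    rw [mulVec_neg, mulVec_mulVec]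
  have hfeedback : Gᵀ *ᵥ (Quu *ᵥ k) = ((Fuᵀ * M)ᵀ * Quu⁻¹) *ᵥ Qu := by
    rw [transpose_neg, hQuu.transpose_nonsing_inv_mul, mulVec_neg,
      mulVec_nonsing_inv_mulVec hQuuInv, neg_mulVec, mulVec_neg, neg_neg]
  rw [hQhx, hQhu, hQhux, sumElim_sub_fromCols_transpose_mul_mulVec, hfeedforward, hfeedback,
    sub_eq_add_neg]
end

section
/- Let t_s ≤ t_f be integers and, for each t ∈ [t_s, t_f], let G_t ∈ ℝ^{m_t×r} and Q_uu^t ∈ ℝ^{m_t×m_t} be symmetric. Define the residual value Hessians backward by V_{x_r x_r}^{t_f+1} = V_{xx}^{t_f+1} and V_{x_r x_r}^t = V_{x_r x_r}^{t+1} − G_tᵀ Q_uu^t G_t for t ∈ [t_s, t_f], and set Ṽ_{xx}^{t_s} = V_{xx}^{t_s} + V_{x x_r}^{t_s} + (V_{x x_r}^{t_s})ᵀ + V_{x_r x_r}^{t_s}, where V_{xx}^{t_s} is the value Hessian of the corresponding feedforward network and V_{x x_r}^{t_s} ∈ ℝ^{r×r} the mixed value derivative at t_s. Then Ṽ_{xx}^{t_s}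 = V_{xx}^{t_s} + V_{xx}^{t_f+1} − Σ_{t ∈ [t_s, t_f]} G_tᵀ Q_uu^t G_t + V_{x x_r}^{t_s} + (V_{x x_r}^{t_s})ᵀ; that is, the value Hessian at the splitting stage receives, in addition to the feedforward Hessian and the merged shortcut Hessian, a correction sum from the Bellman minimization and contributions from the mixed partial derivative between the own state and the residual state. -/
open Matrix

/-- The value Hessian at the splitting stage of a residual shortcut equals the
feedforward Hessian plus the merged shortcut Hessian, minus the Bellman correction sum,
plus mixed-derivative contributions. -/
theorem gtddp_value_hessian_shortcut {r : ℕ} (ts tf : ℕ) (hle : ts ≤ tf) (m : ℕ → ℕ)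
    (G : ∀ t, Matrix (Fin (m t)) (Fin r) ℝ)
    (Quu : ∀ t, Matrix (Fin (m t)) (Fin (m t)) ℝ)
    (hQuu : ∀ t, (Quu t).IsSymm)
    (Vxrxr : ℕ → Matrix (Fin r) (Fin r) ℝ)
    (Vxxts Vxxtf1 Vxxrts : Matrix (Fin r) (Fin r) ℝ)
    (hterm : Vxrxr (tf + 1) = Vxxtf1)
    (hrec : ∀ t, ts ≤ t → t ≤ tf →
      Vxrxr t = Vxrxr (t+1) - (G t)ᵀ * (Quu t) * (G t)) :
    Vxxts + Vxxrts + Vxxrtsᵀ + Vxrxr ts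
      = Vxxts + Vxxtf1 - (∑ t ∈ Finset.Icc ts tf, (G t)ᵀ * (Quu t) * (G t))
        + Vxxrts + Vxxrtsᵀ := by
  have key : ∀ k, k ≤ tf + 1 - ts →
      Vxrxr (tf + 1 - k) = Vxxtf1 - ∑ t ∈ Finset.Icc (tf + 1 - k) tf, (G t)ᵀ * (Quu t) * (G t) := by
    intro k
    induction k with
    | zero =>
      intro _
      simp [hterm]
    | succ k ih =>
      intro hk
      have hk' : k ≤ tf + 1 - ts := Nat.le_of_succ_le hk
      have hts : ts ≤ tf + 1 - (k + 1) := by omega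
      have htf : tf + 1 - (k + 1) ≤ tf := by omega
      have hsucc : (tf + 1 - (k + 1)) + 1 = tf + 1 - k := by omega
      have hins : Finset.Icc (tf + 1 - (k + 1)) tf
          = insert (tf + 1 - (k + 1)) (Finset.Icc (tf + 1 - k) tf) := by
        ext x
        simp only [Finset.mem_Icc, Finset.mem_insert]
        omega
      rw [hrec _ hts htf, hsucc, ih hk', hins,
        Finset.sum_insert (by simp; omega)]
      abel
  have h := key (tf + 1 - ts) le_rfl
  have : tf + 1 - (tf + 1 - ts) = ts := by omega
  rw [this] at h
  rw [h]
  abel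
end

section
/- Let H = [[Q_uu, Q_uv],[Q_vu, Q_vv]] be symmetric positive definite (so Q_vu = Q_uvᵀ). Fix δx ∈ ℝⁿ and δx_r ∈ ℝʳ. Then the joint quadratic (δu, δv) ↦ Q_uᵀδu + Q_vᵀδv + ½[δu;δv]ᵀ H [δu;δv] + δuᵀ(Q_ux δx + Q_{u x_r} δx_r) + δvᵀ(Q_vx δx + Q_{v x_r} δx_r) has a unique minimizer (δu*, δv*), given by δu* = k̃ + K̃ δx + G̃ δx_r and δv* = Ĩ + H̃ δx + L̃ δx_r, where Q̃_uu = Q_uu − Q_uv Q_vv⁻¹ Q_vu, Q̃_vv = Q_vv − Q_vu Q_uu⁻¹ Q_uv, k̃ = −Q̃_uu⁻¹(Q_u − Q_uv Q_vv⁻¹ Q_v), K̃ = −Q̃_uu⁻¹(Q_ux − Q_uv Q_vv⁻¹ Q_vx), G̃ = −Q̃_uu⁻¹(Q_{u x_r} − Q_uv Q_vv⁻¹ Q_{v x_r}), Ĩ = −Q̃_vv⁻¹(Q_v − Q_vu Q_uu⁻¹ Q_u), H̃ = −Q̃_vv⁻¹(Q_vx − Q_vu Q_uu⁻¹ Q_ux),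 and L̃ = −Q̃_vv⁻¹(Q_{v x_r} − Q_vu Q_uu⁻¹ Q_{u x_r}). -/
/-!
The joint quadratic is `g ⬝ᵥ z + ½ zᵀ H z` with `z = (δu, δv)` and `g` the affine gradient
`(Q_u + Q_ux δx + Q_{u x_r} δx_r, Q_v + Q_vx δx + Q_{v x_r} δx_r)`. Positive definiteness of `H`
makes it strictly convex, so its unique minimizer is the stationary point `-H⁻¹ g`. The two
block rows of `H⁻¹` are given by the Schur-complement inversion formulas, eliminating `v` for the
top row and `u` for the bottom row, and applied to `-g` they are exactly the cooperative gains.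
-/

open Matrix

theorem fromBlocks_inv_mulVec_sumElim {α M P : Type*} [CommRing α] [Fintype M] [Fintype P]
    [DecidableEq M] [DecidableEq P] {A : Matrix M M α} {B : Matrix M P α}
    {C : Matrix P M α} {D : Matrix P P α} (hA : IsUnit A) (hD : IsUnit D)
    (hH : IsUnit (fromBlocks A B C D)) (a : M → α) (b : P → α) :
    (fromBlocks A B C D)⁻¹ *ᵥ Sum.elim a b =
      Sum.elim ((A - B * D⁻¹ * C)⁻¹ *ᵥ (a - (B * D⁻¹) *ᵥ b))
        ((D - C * A⁻¹ * B)⁻¹ *ᵥ (b - (C * A⁻¹) *ᵥ a)) := by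
  let _ := hA.invertible
  let _ := hD.invertible
  let _ := hH.invertible
  let _ := (isUnit_fromBlocks_iff_of_invertible₂₂.mp hH).invertible
  let _ := (isUnit_fromBlocks_iff_of_invertible₁₁.mp hH).invertible
  ext (i | j)
  · rw [← invOf_eq_nonsing_inv, invOf_fromBlocks₂₂_eq]
    simp only [invOf_eq_nonsing_inv, fromBlocks_mulVec, Sum.elim_inl, mulVec_sub, neg_mulVec,
      ← mulVec_mulVec, Matrix.mul_assoc, Pi.add_apply, Pi.sub_apply, Pi.neg_apply,
      Sum.elim_comp_inl, Sum.elim_comp_inr]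
    ring
  · rw [← invOf_eq_nonsing_inv, invOf_fromBlocks₁₁_eq]
    simp only [invOf_eq_nonsing_inv, fromBlocks_mulVec, Sum.elim_inr, mulVec_sub, neg_mulVec,
      ← mulVec_mulVec, Matrix.mul_assoc, Pi.add_apply, Pi.sub_apply, Pi.neg_apply,
      Sum.elim_comp_inl, Sum.elim_comp_inr]
    ring

theorem feedforward_add_feedback_eq {α ι κ ν ρ : Type*} [CommRing α] [Fintype ι] [Fintype κ]
    [Fintype ν] [Fintype ρ] (S : Matrix ι ι α) (F : Matrix ι κ α) (q : ι → α) (q' : κ → α)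
    (X : Matrix ι ν α) (X' : Matrix κ ν α) (R : Matrix ι ρ α) (R' : Matrix κ ρ α)
    (x : ν → α) (y : ρ → α) :
    -(S *ᵥ (q - F *ᵥ q')) + -(S * (X - F * X')) *ᵥ x + -(S * (R - F * R')) *ᵥ y =
      -(S *ᵥ ((q + (X *ᵥ x + R *ᵥ y)) - F *ᵥ (q' + (X' *ᵥ x + R' *ᵥ y)))) := by
  simp only [neg_mulVec, mulVec_sub, mulVec_add, ← mulVec_mulVec, sub_mulVec]
  abel

theorem Matrix.IsSymm.dotProduct_mulVec_comm {α N : Type*} [CommSemiring α] [Fintype N]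
    {H : Matrix N N α} (hH : H.IsSymm) (u v : N → α) : u ⬝ᵥ H *ᵥ v = v ⬝ᵥ H *ᵥ u := by
  rw [dotProduct_mulVec, ← mulVec_transpose, hH.eq, dotProduct_comm]

theorem Matrix.PosDef.dotProduct_add_half_quadForm_lt {N : Type*} [Fintype N]
    {H : Matrix N N ℝ} (hH : H.PosDef) {a z₀ z : N → ℝ}
    (hz₀ : H *ᵥ z₀ = -a) (hz : z ≠ z₀) :
    a ⬝ᵥ z₀ + 1 / 2 * (z₀ ⬝ᵥ H *ᵥ z₀) < a ⬝ᵥ z + 1 / 2 * (z ⬝ᵥ H *ᵥ z) := by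
  obtain ⟨d, rfl⟩ : ∃ d, z = z₀ + d := ⟨z - z₀, by abel⟩
  have hd : 0 < d ⬝ᵥ H *ᵥ d := hH.dotProduct_mulVec_pos (by simpa using hz)
  have hcross : d ⬝ᵥ H *ᵥ z₀ = -(a ⬝ᵥ d) := by
    rw [hz₀, dotProduct_neg, dotProduct_comm]
  have hexpand : (z₀ + d) ⬝ᵥ H *ᵥ (z₀ + d) =
      z₀ ⬝ᵥ H *ᵥ z₀ + 2 * (d ⬝ᵥ H *ᵥ z₀) + d ⬝ᵥ H *ᵥ d := by
    simp only [mulVec_add, dotProduct_add, add_dotProduct,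
      (isHermitian_iff_isSymm.mp hH.isHermitian).dotProduct_mulVec_comm z₀ d]
    ring
  rw [hexpand, hcross, dotProduct_add]
  linarith

theorem Matrix.PosDef.isUnit_of_fromBlocks {K M P : Type*} [Field K] [PartialOrder K]
    [StarRing K] [Fintype M] [Fintype P] [DecidableEq M] [DecidableEq P] {A : Matrix M M K}
    {B : Matrix M P K} {C : Matrix P M K} {D : Matrix P P K}
    (hpd : (fromBlocks A B C D).PosDef) : IsUnit A ∧ IsUnit D :=
  ⟨(hpd.submatrix Sum.inl_injective : A.PosDef).isUnit,
    (hpd.submatrix Sum.inr_injective : D.PosDef).isUnit⟩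

/-- The joint (cooperative-game) quadratic in (δu, δv) with positive definite
block Hessian H = [[Q_uu, Q_uv],[Q_vu, Q_vv]] has a unique minimizer given by the
cooperative gains k̃, K̃, G̃, Ĩ, H̃, L̃. -/
theorem cooperative_game_unique_minimizer {m p n r : ℕ}
    (Qu : Fin m → ℝ) (Qv : Fin p → ℝ)
    (Quu : Matrix (Fin m) (Fin m) ℝ) (Qvv : Matrix (Fin p) (Fin p) ℝ)
    (Quv : Matrix (Fin m) (Fin p) ℝ)
    (Qux : Matrix (Fin m) (Fin n) ℝ) (Quxr : Matrix (Fin m) (Fin r) ℝ)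
    (Qvx : Matrix (Fin p) (Fin n) ℝ) (Qvxr : Matrix (Fin p) (Fin r) ℝ)
    (δx : Fin n → ℝ) (δxr : Fin r → ℝ)
    (hpd : (fromBlocks Quu Quv Quvᵀ Qvv).PosDef) :
    let H : Matrix (Fin m ⊕ Fin p) (Fin m ⊕ Fin p) ℝ := fromBlocks Quu Quv Quvᵀ Qvv
    let f : (Fin m → ℝ) → (Fin p → ℝ) → ℝ := fun δu δv =>
      Qu ⬝ᵥ δu + Qv ⬝ᵥ δv
        + (1/2) * (Sum.elim δu δv ⬝ᵥ (H *ᵥ Sum.elim δu δv))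
        + δu ⬝ᵥ (Qux *ᵥ δx + Quxr *ᵥ δxr)
        + δv ⬝ᵥ (Qvx *ᵥ δx + Qvxr *ᵥ δxr)
    let Qtuu := Quu - Quv * Qvv⁻¹ * Quvᵀ
    let Qtvv := Qvv - Quvᵀ * Quu⁻¹ * Quv
    let ktil : Fin m → ℝ := -(Qtuu⁻¹ *ᵥ (Qu - (Quv * Qvv⁻¹) *ᵥ Qv))
    let Ktil := -(Qtuu⁻¹ * (Qux - Quv * Qvv⁻¹ * Qvx))
    let Gtil := -(Qtuu⁻¹ * (Quxr - Quv * Qvv⁻¹ * Qvxr))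
    let Itil : Fin p → ℝ := -(Qtvv⁻¹ *ᵥ (Qv - (Quvᵀ * Quu⁻¹) *ᵥ Qu))
    let Htil := -(Qtvv⁻¹ * (Qvx - Quvᵀ * Quu⁻¹ * Qux))
    let Ltil := -(Qtvv⁻¹ * (Qvxr - Quvᵀ * Quu⁻¹ * Quxr))
    let δustar := ktil + Ktil *ᵥ δx + Gtil *ᵥ δxr
    let δvstar := Itil + Htil *ᵥ δx + Ltil *ᵥ δxr
    ∀ (δu : Fin m → ℝ) (δv : Fin p → ℝ), (δu, δv) ≠ (δustar, δvstar) →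
      f δustar δvstar < f δu δv := by
  intro H f Qtuu Qtvv ktil Ktil Gtil Itil Htil Ltil δustar δvstar δu δv hne
  set gu := Qu + (Qux *ᵥ δx + Quxr *ᵥ δxr)
  set gv := Qv + (Qvx *ᵥ δx + Qvxr *ᵥ δxr)
  obtain ⟨hA, hD⟩ := hpd.isUnit_of_fromBlocks
  have hu : δustar = -(Qtuu⁻¹ *ᵥ (gu - (Quv * Qvv⁻¹) *ᵥ gv)) :=
    feedforward_add_feedback_eq _ _ _ _ _ _ _ _ _ _
  have hv : δvstar = -(Qtvv⁻¹ *ᵥ (gv - (Quvᵀ * Quu⁻¹) *ᵥ gu)) :=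
    feedforward_add_feedback_eq _ _ _ _ _ _ _ _ _ _
  have hstar : Sum.elim δustar δvstar = H⁻¹ *ᵥ -Sum.elim gu gv := by
    rw [mulVec_neg, fromBlocks_inv_mulVec_sumElim hA hD hpd.isUnit, hu, hv]
    ext (i | j) <;> rfl
  have hstationary : H *ᵥ Sum.elim δustar δvstar = -Sum.elim gu gv := by
    rw [hstar, mulVec_mulVec, mul_nonsing_inv _ (isUnit_iff_isUnit_det _ |>.mp hpd.isUnit),
      one_mulVec]
  have hf : ∀ u v, f u v = Sum.elim gu gv ⬝ᵥ Sum.elim u v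
      + 1 / 2 * (Sum.elim u v ⬝ᵥ H *ᵥ Sum.elim u v) := by
    intro u v
    simp only [f, gu, gv, sumElim_dotProduct_sumElim, add_dotProduct, dotProduct_comm u,
      dotProduct_comm v]
    ring
  rw [hf, hf]
  exact hpd.dotProduct_add_half_quadForm_lt hstationary
    ((Equiv.sumArrowEquivProdArrow _ _ _).symm.injective.ne hne)
end

section
/- Let U ∈ ℝ^{N×N} be orthogonal, γ > 0, and λ ∈ ℝᴺ with γ + λ_i ≠ 0 for every i. Set Q_uu = Q_vv = U (diag(λ) + γ I) Uᵀ and Q_uv = Q_vu = −U diag(λ) Uᵀ. Then the cooperative matrix Q̃_uu := Q_uu − Q_uv Q_vv⁻¹ Q_vu equals U (diag(λ̃) + γ I) Uᵀ with λ̃_i = (γ / (γ + λ_i)) λ_i for every i; that is, for the cooperative-game module where both layers share the same input and output channel, the cooperative curvature corresponds to a rescaling of the eigenvalues of Q_uu in its eigenbasis. -/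
open Matrix

/-- For the cooperative-game module where both layers share input and output
channel, the cooperative curvature Q̃_uu = Q_uu − Q_uv Q_vv⁻¹ Q_vu is a rescaling of the
eigenvalues of Q_uu in its eigenbasis: λ̃ᵢ = (γ/(γ+λᵢ)) λᵢ. -/
theorem cooperative_curvature_eigen_rescaling {N : ℕ}
    (U : Matrix (Fin N) (Fin N) ℝ)
    (hU : U * Uᵀ = 1) (hU' : Uᵀ * U = 1)
    (γ : ℝ) (hγ : 0 < γ) (lam : Fin N → ℝ)
    (hne : ∀ i, γ + lam i ≠ 0) :
    let Quu := U * (Matrix.diagonal lam + γ • (1 : Matrix (Fin N) (Fin N) ℝ)) * Uᵀ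
    let Qvv := Quu
    let Quv := -(U * Matrix.diagonal lam * Uᵀ)
    let Qvu := Quv
    let lamt : Fin N → ℝ := fun i => (γ / (γ + lam i)) * lam i
    Quu - Quv * Qvv⁻¹ * Qvu
      = U * (Matrix.diagonal lamt + γ • (1 : Matrix (Fin N) (Fin N) ℝ)) * Uᵀ := by
  intro Quu Qvv Quv Qvu lamt
  have hconj : ∀ A B : Matrix (Fin N) (Fin N) ℝ,
      (U * A * Uᵀ) * (U * B * Uᵀ) = U * (A * B) * Uᵀ := by
    intro A B
    simp only [Matrix.mul_assoc]
    rw [← Matrix.mul_assoc Uᵀ U, hU', Matrix.one_mul]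
  have hdiag : ∀ f : Fin N → ℝ,
      Matrix.diagonal f + γ • (1 : Matrix (Fin N) (Fin N) ℝ)
        = Matrix.diagonal (fun i => f i + γ) := by
    intro f
    ext i j
    rcases eq_or_ne i j with h | h <;>
      simp [Matrix.diagonal_apply, Matrix.one_apply, h]
  have hne' : ∀ i, lam i + γ ≠ 0 := fun i h => hne i (by linarith)
  -- inverse of Qvv
  have hinv : Qvv⁻¹ = U * Matrix.diagonal (fun i => (lam i + γ)⁻¹) * Uᵀ := by
    apply Matrix.inv_eq_right_inv
    show (U * (Matrix.diagonal lam + γ • 1) * Uᵀ)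
        * (U * Matrix.diagonal (fun i => (lam i + γ)⁻¹) * Uᵀ) = 1
    rw [hdiag, hconj, Matrix.diagonal_mul_diagonal]
    have : (fun i => (lam i + γ) * (lam i + γ)⁻¹) = fun _ => (1 : ℝ) := by
      funext i; exact mul_inv_cancel₀ (hne' i)
    rw [this, Matrix.diagonal_one, Matrix.mul_one, hU]
  show Quu - Quv * Qvv⁻¹ * Qvu = _
  rw [hinv]
  show U * (Matrix.diagonal lam + γ • 1) * Uᵀ
      - -(U * Matrix.diagonal lam * Uᵀ) * (U * Matrix.diagonal (fun i => (lam i + γ)⁻¹) * Uᵀ)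
        * -(U * Matrix.diagonal lam * Uᵀ) = _
  simp only [neg_mul, mul_neg, neg_neg]
  rw [hconj, hconj, Matrix.diagonal_mul_diagonal,
    Matrix.diagonal_mul_diagonal, hdiag lam, hdiag lamt,
    ← Matrix.sub_mul, ← Matrix.mul_sub, Matrix.diagonal_sub]
  have key : (fun i => lam i + γ - lam i * (lam i + γ)⁻¹ * lam i)
      = fun i => lamt i + γ := by
    funext i
    show lam i + γ - lam i * (lam i + γ)⁻¹ * lam i = γ / (γ + lam i) * lam i + γ
    field_simp [hne i, hne' i]
    ring
  rw [key]
end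

section
/- Suppose the value Hessian at stage t+1 is a rank-one outer product, V_{xx}^{t+1} = z zᵀ for some z ∈ ℝ^{n'}. Let F_x ∈ ℝ^{n'×n}, F_u ∈ ℝ^{n'×m} be the layer Jacobians and Q_uu ∈ ℝ^{m×m} symmetric invertible. Define q_x = F_xᵀ z and q_u = F_uᵀ z. Then under the Gauss–Newton (first-order-dynamics) expansion, Q_xx := F_xᵀ V_{xx}^{t+1} F_x = q_x q_xᵀ, Q_ux := F_uᵀ V_{xx}^{t+1} F_x = q_u q_xᵀ, and the DDP value-Hessian update satisfies V_{xx}^t := Q_xx − Q_xu Q_uu⁻¹ Q_ux = (1 − q_uᵀ Q_uu⁻¹ q_u) q_x q_xᵀ; in particular Q_xx, Q_ux and V_{xx}^t are all outer products of the propagated vectors (of rank at most one). -/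
open Matrix

namespace Matrix

variable {l m n o R : Type*} [CommSemiring R]

theorem transpose_mul_vecMulVec_mul [Fintype l] (A : Matrix l m R) (x y : l → R)
    (B : Matrix l n R) :
    Aᵀ * vecMulVec x y * B = vecMulVec (Aᵀ *ᵥ x) (Bᵀ *ᵥ y) := by
  rw [mul_vecMulVec, vecMulVec_mul, mulVec_transpose B]

theorem vecMulVec_mul_mul_vecMulVec [Fintype m] (a : n → R) (b c : m → R) (M : Matrix m m R)
    (d : o → R) :
    vecMulVec a b * M * vecMulVec c d = (b ⬝ᵥ (M *ᵥ c)) • vecMulVec a d := by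
  rw [vecMulVec_mul, vecMulVec_mul_vecMulVec, vecMulVec_smul, dotProduct_mulVec]

end Matrix

theorem ddp_outer_product_factorization_general {n npr m : ℕ}
    (z : Fin npr → ℝ)
    (Fx : Matrix (Fin npr) (Fin n) ℝ) (Fu : Matrix (Fin npr) (Fin m) ℝ)
    (Quu : Matrix (Fin m) (Fin m) ℝ) :
    let Vxx1 := vecMulVec z z
    let qx := Fxᵀ *ᵥ z
    let qu := Fuᵀ *ᵥ z
    let Qxx := Fxᵀ * Vxx1 * Fx
    let Qux := Fuᵀ * Vxx1 * Fx
    let Vxxt := Qxx - Quxᵀ * Quu⁻¹ * Qux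
    Qxx = vecMulVec qx qx ∧ Qux = vecMulVec qu qx
      ∧ Vxxt = (1 - qu ⬝ᵥ (Quu⁻¹ *ᵥ qu)) • vecMulVec qx qx
      ∧ Qxx.rank ≤ 1 ∧ Qux.rank ≤ 1 ∧ Vxxt.rank ≤ 1 := by
  intro Vxx1 qx qu Qxx Qux Vxxt
  have hQxx : Qxx = vecMulVec qx qx := transpose_mul_vecMulVec_mul Fx z z Fx
  have hQux : Qux = vecMulVec qu qx := transpose_mul_vecMulVec_mul Fu z z Fx
  have hVxxt : Vxxt = (1 - qu ⬝ᵥ (Quu⁻¹ *ᵥ qu)) • vecMulVec qx qx := by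
    change Qxx - Quxᵀ * Quu⁻¹ * Qux = _
    rw [hQxx, hQux, transpose_vecMulVec, vecMulVec_mul_mul_vecMulVec, sub_smul, one_smul]
  refine ⟨hQxx, hQux, hVxxt, ?_, ?_, ?_⟩
  · exact hQxx ▸ rank_vecMulVec_le qx qx
  · exact hQux ▸ rank_vecMulVec_le qu qx
  · rw [hVxxt, ← smul_vecMulVec]
    exact rank_vecMulVec_le _ qx

/-- If V_xx^{t+1} = z zᵀ is a rank-one outer product, then under the
Gauss–Newton expansion Q_xx = q_x q_xᵀ, Q_ux = q_u q_xᵀ, and the DDP value-Hessian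
update V_xx^t = Q_xx − Q_xu Q_uu⁻¹ Q_ux = (1 − q_uᵀQ_uu⁻¹q_u) q_x q_xᵀ, all of rank ≤ 1. -/
theorem ddp_outer_product_factorization {n npr m : ℕ}
    (z : Fin npr → ℝ)
    (Fx : Matrix (Fin npr) (Fin n) ℝ) (Fu : Matrix (Fin npr) (Fin m) ℝ)
    (Quu : Matrix (Fin m) (Fin m) ℝ)
    (hsymm : Quu.IsSymm) (hinv : IsUnit Quu.det) :
    let Vxx1 := vecMulVec z z
    let qx := Fxᵀ *ᵥ z
    let qu := Fuᵀ *ᵥ z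
    let Qxx := Fxᵀ * Vxx1 * Fx
    let Qux := Fuᵀ * Vxx1 * Fx
    let Vxxt := Qxx - Quxᵀ * Quu⁻¹ * Qux
    Qxx = vecMulVec qx qx ∧ Qux = vecMulVec qu qx
      ∧ Vxxt = (1 - qu ⬝ᵥ (Quu⁻¹ *ᵥ qu)) • vecMulVec qx qx
      ∧ Qxx.rank ≤ 1 ∧ Qux.rank ≤ 1 ∧ Vxxt.rank ≤ 1 :=
  ddp_outer_product_factorization_general z Fx Fu Quu
end

section
/- Let L ∈ ℝ^{m×m} be symmetric positive definite and q_u ∈ ℝᵐ, and set Q_uu = q_u q_uᵀ + L (the Gauss–Newton curvature with regularization Hessian L). Then Q_uu is positive definite, and the scalar c := 1 − q_uᵀ Q_uu⁻¹ q_u satisfies c = 1/(1 + q_uᵀ L⁻¹ q_u), so 0 < c ≤ 1. Consequently, for any q_x ∈ ℝⁿ, the matrix c · q_x q_xᵀ is positive semidefinite of rank at most one and equals z_x z_xᵀ with z_x = √c · q_x; hence the DDP value-Hessian update V_{xx}^t = (1 − q_uᵀ Q_uu⁻¹ q_u) q_x q_xᵀ is itself an outer product of a vector. -/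
/-!
With `s = q_uᵀ L⁻¹ q_u ≥ 0`, the vector `L⁻¹ q_u` satisfies `Q_uu (L⁻¹ q_u) = (1 + s) q_u`
(Sherman–Morrison), so `(1 + s) Q_uu⁻¹ q_u = L⁻¹ q_u` and hence `(1 + s) c = 1`. Thus
`c = 1 / (1 + s) ∈ (0, 1]`, and `c q_x q_xᵀ = (√c q_x)(√c q_x)ᵀ` is a PSD outer product.
-/

open Matrix

section ShermanMorrison

variable {m α : Type*} [Fintype m] [DecidableEq m] [CommRing α]

theorem smul_inv_add_vecMulVec_mulVec {L : Matrix m m α} (u v : m → α) (hL : IsUnit L.det)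
    (hQ : IsUnit (vecMulVec u v + L).det) :
    (1 + v ⬝ᵥ (L⁻¹ *ᵥ u)) • ((vecMulVec u v + L)⁻¹ *ᵥ u) = L⁻¹ *ᵥ u := by
  have hQL : (vecMulVec u v + L) *ᵥ (L⁻¹ *ᵥ u) = (1 + v ⬝ᵥ (L⁻¹ *ᵥ u)) • u := by
    rw [add_mulVec, vecMulVec_mulVec, mulVec_mulVec, mul_nonsing_inv _ hL, one_mulVec,
      op_smul_eq_smul, add_smul, one_smul, add_comm]
  rw [← mulVec_smul, ← hQL, mulVec_mulVec, nonsing_inv_mul _ hQ, one_mulVec]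

theorem one_add_dotProduct_mul_one_sub_dotProduct_inv_add_vecMulVec {L : Matrix m m α}
    (u v : m → α) (hL : IsUnit L.det) (hQ : IsUnit (vecMulVec u v + L).det) :
    (1 + v ⬝ᵥ (L⁻¹ *ᵥ u)) * (1 - v ⬝ᵥ ((vecMulVec u v + L)⁻¹ *ᵥ u)) = 1 := by
  have h := congrArg (v ⬝ᵥ ·) (smul_inv_add_vecMulVec_mulVec u v hL hQ)
  simp only [dotProduct_smul, smul_eq_mul] at h
  linear_combination -h

end ShermanMorrison

theorem posSemidef_vecMulVec_self {n R : Type*} [Finite n] [CommRing R] [PartialOrder R]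
    [StarRing R] [StarOrderedRing R] [TrivialStar R] (x : n → R) :
    (vecMulVec x x).PosSemidef := by
  simpa using posSemidef_vecMulVec_self_star x

theorem smul_vecMulVec_self_eq_vecMulVec_sqrt_smul {n : Type*} {c : ℝ} (hc : 0 ≤ c) (x : n → ℝ) :
    c • vecMulVec x x = vecMulVec (√c • x) (√c • x) := by
  rw [smul_vecMulVec, vecMulVec_smul, smul_smul, Real.mul_self_sqrt hc]

/-- With Q_uu = q_u q_uᵀ + L and L symmetric positive definite, Q_uu is
positive definite, c = 1 − q_uᵀQ_uu⁻¹q_u = 1/(1 + q_uᵀL⁻¹q_u) ∈ (0,1], and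
c·q_x q_xᵀ is PSD of rank ≤ 1 and equals z_x z_xᵀ with z_x = √c · q_x. -/
theorem ddp_outer_product_scalar {m n : ℕ}
    (L : Matrix (Fin m) (Fin m) ℝ) (hL : L.PosDef)
    (qu : Fin m → ℝ) (qx : Fin n → ℝ) :
    let Quu := vecMulVec qu qu + L
    let c := 1 - qu ⬝ᵥ (Quu⁻¹ *ᵥ qu)
    let zx := Real.sqrt c • qx
    Quu.PosDef ∧ c = 1 / (1 + qu ⬝ᵥ (L⁻¹ *ᵥ qu)) ∧ 0 < c ∧ c ≤ 1
      ∧ (c • vecMulVec qx qx).PosSemidef ∧ (c • vecMulVec qx qx).rank ≤ 1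
      ∧ c • vecMulVec qx qx = vecMulVec zx zx := by
  intro Quu c zx
  have hQ : Quu.PosDef := PosDef.posSemidef_add (posSemidef_vecMulVec_self qu) hL
  have hs : 0 ≤ qu ⬝ᵥ (L⁻¹ *ᵥ qu) := by
    simpa using hL.inv.posSemidef.dotProduct_mulVec_nonneg qu
  have hc : c = 1 / (1 + qu ⬝ᵥ (L⁻¹ *ᵥ qu)) := eq_one_div_of_mul_eq_one_right <|
    one_add_dotProduct_mul_one_sub_dotProduct_inv_add_vecMulVec qu qu hL.det_pos.ne'.isUnit
      hQ.det_pos.ne'.isUnit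
  have hc_pos : 0 < c := hc ▸ by positivity
  have hc_le : c ≤ 1 := hc ▸ (div_le_one (by positivity)).2 (by linarith)
  have hzx : c • vecMulVec qx qx = vecMulVec zx zx :=
    smul_vecMulVec_self_eq_vecMulVec_sqrt_smul hc_pos.le qx
  exact ⟨hQ, hc, hc_pos, hc_le, hzx ▸ posSemidef_vecMulVec_self zx,
    hzx ▸ rank_vecMulVec_le zx zx, hzx⟩
end
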